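/- For any real n×m matrix Θ, the nuclear norm of Θ equals the minimum over all factorizations Θ = U Vᵀ (with U an n×r matrix and V an m×r matrix for some r) of (1/2)‖U‖_F² + (1/2)‖V‖_F². -/

import Mathlib

open Matrix BigOperators

/-- Nuclear norm: sum of singular values, i.e. trace of the PSD square root of `Θᵀ * Θ`. -/
noncomputable def nuclearNorm {n m : ℕ} (Θ : Matrix (Fin n) (Fin m) ℝ) : ℝ :=
  (((Matrix.posSemidef_conjTranspose_mul_self Θ).isHermitian.eigenvectorUnitary :
        Matrix (Fin m) (Fin m) ℝ) *
      diagonal ((RCLike.ofReal : ℝ → ℝ) ∘ (√·) ∘ (Matrix.posSemidef_conjTranspose_mul_self Θ).isHermitian.eigenvalues) *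
      (star (Matrix.posSemidef_conjTranspose_mul_self Θ).isHermitian.eigenvectorUnitary :
        Matrix (Fin m) (Fin m) ℝ)).trace

/-- Frobenius norm. -/
noncomputable def frobNorm {n m : ℕ} (A : Matrix (Fin n) (Fin m) ℝ) : ℝ :=
  Real.sqrt (∑ i, ∑ j, (A i j) ^ 2)

/-- `B` is the Moore–Penrose pseudoinverse of `A` (the four Penrose conditions). -/
def IsMoorePenrose {n m : ℕ} (A : Matrix (Fin n) (Fin m) ℝ) (B : Matrix (Fin m) (Fin n) ℝ) : Prop :=
  A * B * A = A ∧ B * A * B = B ∧ (A * B)ᵀ = A * B ∧ (B * A)ᵀ = B * A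

/-- `Pr` is the orthogonal projection matrix onto the subspace `S`. -/
def IsOrthProjOnto {n : ℕ} (Pr : Matrix (Fin n) (Fin n) ℝ) (S : Submodule ℝ (Fin n → ℝ)) : Prop :=
  Prᵀ = Pr ∧ Pr * Pr = Pr ∧ LinearMap.range Pr.mulVecLin = S

/-!
Diagonalize `Θᵀ Θ = B diag(σ²) Bᵀ` with `B` orthogonal and `σ ≥ 0`: then `C = Θ B` has orthogonal
columns of lengths `σᵢ`, and `‖Θ‖_* = ∑ σᵢ`. The factorization `U = C diag(σ^{-1/2})`,
`V = B diag(σ^{1/2})` attains `∑ σᵢ`. Conversely `W = C diag(σ⁻¹)` (with `0⁻¹ = 0`) is a partial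
isometry with `Wᵀ C = diag σ`, so for any `Θ = U Vᵀ`,
`∑ σᵢ = tr((Bᵀ V)ᵀ (Wᵀ U)) ≤ ½‖Wᵀ U‖² + ½‖Bᵀ V‖² ≤ ½‖U‖² + ½‖V‖²`,
because left multiplication by `Wᵀ` or `Bᵀ` does not increase the Frobenius norm.
-/

lemma frobNorm_sq {p q : ℕ} (X : Matrix (Fin p) (Fin q) ℝ) :
    frobNorm X ^ 2 = (Xᵀ * X).trace := by
  rw [frobNorm, Real.sq_sqrt (by positivity), Finset.sum_comm]
  simp [Matrix.trace, Matrix.mul_apply, sq]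

lemma trace_transpose_mul_le {p q : ℕ} (X Y : Matrix (Fin p) (Fin q) ℝ) :
    (Xᵀ * Y).trace ≤ 1 / 2 * frobNorm X ^ 2 + 1 / 2 * frobNorm Y ^ 2 := by
  have hsymm : (Yᵀ * X).trace = (Xᵀ * Y).trace := by
    rw [← trace_transpose, transpose_mul, transpose_transpose]
  have hexpand : frobNorm (X - Y) ^ 2 =
      frobNorm X ^ 2 + frobNorm Y ^ 2 - 2 * (Xᵀ * Y).trace := by
    rw [frobNorm_sq, frobNorm_sq, frobNorm_sq, transpose_sub, Matrix.sub_mul, Matrix.mul_sub,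
      Matrix.mul_sub, trace_sub, trace_sub, trace_sub, hsymm]
    ring
  nlinarith [sq_nonneg (frobNorm (X - Y))]

lemma frobNorm_transpose_mul_sq_le {k p q : ℕ} {Q : Matrix (Fin p) (Fin k) ℝ}
    (hQ : Q * Qᵀ * Q = Q) (X : Matrix (Fin p) (Fin q) ℝ) :
    frobNorm (Qᵀ * X) ^ 2 ≤ frobNorm X ^ 2 := by
  have hP : (Q * Qᵀ)ᵀ = Q * Qᵀ := by rw [transpose_mul, transpose_transpose]
  have hPP : Q * Qᵀ * (Q * Qᵀ) = Q * Qᵀ := by rw [← Matrix.mul_assoc, hQ]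
  have hQX : frobNorm (Qᵀ * X) ^ 2 = (Xᵀ * (Q * Qᵀ * X)).trace := by
    rw [frobNorm_sq, transpose_mul, transpose_transpose]
    simp only [Matrix.mul_assoc]
  generalize Q * Qᵀ = P at hP hPP hQX
  have hrest : frobNorm (X - P * X) ^ 2 = frobNorm X ^ 2 - frobNorm (Qᵀ * X) ^ 2 := by
    rw [hQX, frobNorm_sq, frobNorm_sq, transpose_sub, transpose_mul, hP, Matrix.sub_mul,
      Matrix.mul_sub, Matrix.mul_sub]
    simp only [Matrix.mul_assoc, trace_sub]
    rw [← Matrix.mul_assoc P P X, hPP]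
    ring
  nlinarith [sq_nonneg (frobNorm (X - P * X))]

lemma frobNorm_mul_diagonal_sq {p q : ℕ} {C : Matrix (Fin p) (Fin q) ℝ} {d : Fin q → ℝ}
    (hC : Cᵀ * C = diagonal d) (f : Fin q → ℝ) :
    frobNorm (C * diagonal f) ^ 2 = ∑ i, f i ^ 2 * d i := by
  rw [frobNorm_sq, transpose_mul, diagonal_transpose, Matrix.mul_assoc, ← Matrix.mul_assoc Cᵀ,
    hC, diagonal_mul_diagonal, diagonal_mul_diagonal, trace_diagonal]
  congr! 1 with i
  ring

lemma mul_diagonal_eq_self {p q : ℕ} {C : Matrix (Fin p) (Fin q) ℝ} {d f : Fin q → ℝ}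
    (hC : Cᵀ * C = diagonal d) (hf : ∀ i, d i ≠ 0 → f i = 1) :
    C * diagonal f = C := by
  ext k i
  rw [mul_diagonal]
  by_cases hdi : d i = 0
  · have hcol : (fun l => C l i) = 0 := by
      rw [← dotProduct_self_eq_zero, ← hdi, ← diagonal_apply_eq d i, ← hC]
      rfl
    simp [congrFun hcol k]
  · simp [hf i hdi]

lemma mul_diagonal_inv_transpose_mul_eq_diagonal {p q : ℕ} {C : Matrix (Fin p) (Fin q) ℝ}
    {σ : Fin q → ℝ} (hC : Cᵀ * C = diagonal (fun i => σ i ^ 2)) :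
    (C * diagonal (fun i => (σ i)⁻¹))ᵀ * C = diagonal σ := by
  rw [transpose_mul, diagonal_transpose, Matrix.mul_assoc, hC, diagonal_mul_diagonal]
  congr! 2 with i
  rw [sq, ← mul_assoc, inv_mul_mul_self]

lemma mul_diagonal_inv_mul_transpose_mul_self {p q : ℕ} {C : Matrix (Fin p) (Fin q) ℝ}
    {σ : Fin q → ℝ} (hC : Cᵀ * C = diagonal (fun i => σ i ^ 2)) :
    C * diagonal (fun i => (σ i)⁻¹) * (C * diagonal (fun i => (σ i)⁻¹))ᵀ *
      (C * diagonal (fun i => (σ i)⁻¹)) = C * diagonal (fun i => (σ i)⁻¹) := by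
  rw [Matrix.mul_assoc, ← Matrix.mul_assoc _ C, mul_diagonal_inv_transpose_mul_eq_diagonal hC,
    diagonal_mul_diagonal, Matrix.mul_assoc, diagonal_mul_diagonal]
  congr! 3 with i
  simpa [mul_assoc] using mul_inv_mul_cancel (σ i)⁻¹

section Factorization

variable {n m : ℕ} {Θ : Matrix (Fin n) (Fin m) ℝ} {B : Matrix (Fin m) (Fin m) ℝ} {σ : Fin m → ℝ}

lemma sum_le_half_frobNorm_sq_of_eq_mul_transpose (hB : B * Bᵀ = 1)
    (hσ : (Θ * B)ᵀ * (Θ * B) = diagonal (fun i => σ i ^ 2)) {r : ℕ}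
    {U : Matrix (Fin n) (Fin r) ℝ} {V : Matrix (Fin m) (Fin r) ℝ} (hΘ : Θ = U * Vᵀ) :
    ∑ i, σ i ≤ 1 / 2 * frobNorm U ^ 2 + 1 / 2 * frobNorm V ^ 2 := by
  have hWC := mul_diagonal_inv_transpose_mul_eq_diagonal hσ
  have hW := mul_diagonal_inv_mul_transpose_mul_self hσ
  generalize Θ * B * diagonal (fun i => (σ i)⁻¹) = W at hWC hW
  have hBV : (Bᵀ * V)ᵀ = Vᵀ * B := by rw [transpose_mul, transpose_transpose]
  have hB' : B * Bᵀ * B = B := by rw [hB, Matrix.one_mul]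
  calc ∑ i, σ i = (Wᵀ * (Θ * B)).trace := by rw [hWC, trace_diagonal]
    _ = ((Bᵀ * V)ᵀ * (Wᵀ * U)).trace := by
      rw [hBV, trace_mul_comm (Vᵀ * B), hΘ]
      simp only [Matrix.mul_assoc]
    _ ≤ 1 / 2 * frobNorm (Bᵀ * V) ^ 2 + 1 / 2 * frobNorm (Wᵀ * U) ^ 2 :=
      trace_transpose_mul_le _ _
    _ ≤ 1 / 2 * frobNorm U ^ 2 + 1 / 2 * frobNorm V ^ 2 := by
      linarith [frobNorm_transpose_mul_sq_le hW U, frobNorm_transpose_mul_sq_le hB' V]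

lemma exists_eq_mul_transpose_half_frobNorm_sq_eq_sum (hBB : Bᵀ * B = 1) (hB : B * Bᵀ = 1)
    (hσ0 : ∀ i, 0 ≤ σ i) (hσ : (Θ * B)ᵀ * (Θ * B) = diagonal (fun i => σ i ^ 2)) :
    ∃ (U : Matrix (Fin n) (Fin m) ℝ) (V : Matrix (Fin m) (Fin m) ℝ),
      Θ = U * Vᵀ ∧ ∑ i, σ i = 1 / 2 * frobNorm U ^ 2 + 1 / 2 * frobNorm V ^ 2 := by
  set τ : Fin m → ℝ := fun i => √(σ i)
  refine ⟨Θ * B * diagonal (fun i => (τ i)⁻¹), B * diagonal τ, ?_, ?_⟩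
  · have hτ : Θ * B * diagonal (fun i => (τ i)⁻¹ * τ i) = Θ * B := by
      refine mul_diagonal_eq_self hσ fun i hi => inv_mul_cancel₀ ?_
      exact Real.sqrt_ne_zero'.2 ((hσ0 i).lt_of_ne' (by simpa using hi))
    calc Θ = Θ * B * diagonal (fun i => (τ i)⁻¹ * τ i) * Bᵀ := by
          rw [hτ, Matrix.mul_assoc, hB, Matrix.mul_one]
      _ = _ := by
          rw [← diagonal_mul_diagonal, transpose_mul, diagonal_transpose]
          simp only [Matrix.mul_assoc]
  · rw [frobNorm_mul_diagonal_sq hσ, frobNorm_mul_diagonal_sq (hBB.trans diagonal_one.symm),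
      ← mul_add, ← Finset.sum_add_distrib, Finset.mul_sum]
    refine Finset.sum_congr rfl fun i _ => ?_
    rw [inv_pow, Real.sq_sqrt (hσ0 i), sq, ← mul_assoc, inv_mul_mul_self]
    ring

end Factorization

lemma exists_orthogonal_gram_diagonal_nuclearNorm_eq_sum {n m : ℕ}
    (Θ : Matrix (Fin n) (Fin m) ℝ) :
    ∃ (B : Matrix (Fin m) (Fin m) ℝ) (σ : Fin m → ℝ), Bᵀ * B = 1 ∧ B * Bᵀ = 1 ∧
      (∀ i, 0 ≤ σ i) ∧ (Θ * B)ᵀ * (Θ * B) = diagonal (fun i => σ i ^ 2) ∧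
      nuclearNorm Θ = ∑ i, σ i := by
  have hA := posSemidef_conjTranspose_mul_self Θ
  set B : Matrix (Fin m) (Fin m) ℝ :=
    (hA.isHermitian.eigenvectorUnitary : Matrix (Fin m) (Fin m) ℝ)
  set d := hA.isHermitian.eigenvalues
  have hBB : Bᵀ * B = 1 := mem_unitaryGroup_iff'.mp hA.isHermitian.eigenvectorUnitary.2
  have hB : B * Bᵀ = 1 := mem_unitaryGroup_iff.mp hA.isHermitian.eigenvectorUnitary.2
  have hspec : Θᵀ * Θ = B * diagonal d * Bᵀ := hA.isHermitian.spectral_theorem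
  refine ⟨B, fun i => √(d i), hBB, hB, fun i => Real.sqrt_nonneg _, ?_, ?_⟩
  · calc (Θ * B)ᵀ * (Θ * B) = Bᵀ * B * diagonal d * (Bᵀ * B) := by
          simp only [transpose_mul, Matrix.mul_assoc, ← Matrix.mul_assoc Θᵀ Θ, hspec]
      _ = diagonal (fun i => √(d i) ^ 2) := by
          rw [hBB, Matrix.one_mul, Matrix.mul_one]
          congr! 2 with i
          exact (Real.sq_sqrt (hA.eigenvalues_nonneg i)).symm
  · show (B * diagonal (fun i => √(d i)) * Bᵀ).trace = _
    rw [trace_mul_comm, ← Matrix.mul_assoc, hBB, Matrix.one_mul, trace_diagonal]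

/-- Fazel–Srebro: the nuclear norm of Θ is the minimum of (1/2)‖U‖_F² + (1/2)‖V‖_F²
over all factorizations Θ = U Vᵀ. -/
theorem stmt_0 {n m : ℕ} (Θ : Matrix (Fin n) (Fin m) ℝ) :
    IsLeast {c : ℝ | ∃ (r : ℕ) (U : Matrix (Fin n) (Fin r) ℝ) (V : Matrix (Fin m) (Fin r) ℝ),
        Θ = U * Vᵀ ∧ c = (1 / 2) * frobNorm U ^ 2 + (1 / 2) * frobNorm V ^ 2}
      (nuclearNorm Θ) := by
  obtain ⟨B, σ, hBB, hB, hσ0, hσ, hnuc⟩ := exists_orthogonal_gram_diagonal_nuclearNorm_eq_sum Θ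
  rw [hnuc]
  constructor
  · obtain ⟨U, V, hΘ, hsum⟩ := exists_eq_mul_transpose_half_frobNorm_sq_eq_sum hBB hB hσ0 hσ
    exact ⟨m, U, V, hΘ, hsum⟩
  · rintro c ⟨r, U, V, hΘ, rfl⟩
    exact sum_le_half_frobNorm_sq_of_eq_mul_transpose hB hσ hΘ
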